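/- Let q, N ≥ 1 and i ≠ j. Let M_{ij} = I + E with E having (j,i) block I_N. Let A be the symmetric qN × qN matrix which is zero except A_{(i,p),(j,n)} = A_{(j,n),(i,p)} = 1 (a chord between component i strip p and component j strip n). Then M_{ij}^T A M_{ij} has ones exactly at positions ((i,p),(i,n)), ((i,p),(j,n)) and their transposes. -/

import Mathlib

/-!
For a symmetric chord matrix `e_a e_bᵀ + e_b e_aᵀ` one has
`Mᵀ (e_a e_bᵀ + e_b e_aᵀ) M = r_a r_bᵀ + r_b r_aᵀ`, where `r_a` is the row `a` of `M`.
The band sum of component `i` over component `j` fixes the rows `(i, p)` and replaces the row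
`(j, n)` by `e_(j,n) + e_(i,n)`, so the chord `(i, p) — (j, n)` becomes the two chords
`(i, p) — (i, n)` and `(i, p) — (j, n)`.
-/

namespace Matrix

variable {ι R : Type*} [DecidableEq ι] [CommSemiring R]

def chord (a b : ι) : Matrix ι ι R := single a b 1 + single b a 1

theorem chord_apply {a b : ι} (hab : a ≠ b) (x y : ι) :
    (chord a b : Matrix ι ι R) x y = if (x = a ∧ y = b) ∨ (x = b ∧ y = a) then 1 else 0 := by
  simp only [chord, add_apply, single_apply]
  split_ifs <;> grind

theorem chord_add_chord_apply {a b c : ι} (hab : a ≠ b) (hac : a ≠ c) (hbc : b ≠ c) (x y : ι) :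
    (chord a c + chord a b : Matrix ι ι R) x y =
      if (x = a ∧ y = c) ∨ (x = a ∧ y = b) ∨ (y = a ∧ x = c) ∨ (y = a ∧ x = b) then 1 else 0 := by
  rw [add_apply, chord_apply hab, chord_apply hac]
  split_ifs <;> grind

variable {κ : Type*} [DecidableEq κ]

/-- Indices are pairs (component, strip). -/
def bandSum (i j : κ) : Matrix (κ × ι) (κ × ι) R :=
  1 + of fun x y => if x.1 = j ∧ y.1 = i ∧ x.2 = y.2 then 1 else 0

theorem bandSum_apply_left {i j : κ} (hij : i ≠ j) (p : ι) :
    (bandSum i j : Matrix (κ × ι) (κ × ι) R) (i, p) = Pi.single (i, p) 1 := by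
  ext y
  simp [bandSum, one_apply, Pi.single_apply, hij, eq_comm]

theorem bandSum_apply_right (i j : κ) (n : ι) :
    (bandSum i j : Matrix (κ × ι) (κ × ι) R) (j, n) = Pi.single (j, n) 1 + Pi.single (i, n) 1 := by
  ext ⟨s, u⟩
  simp [bandSum, one_apply, Pi.single_apply, Prod.ext_iff, eq_comm]

variable [Fintype ι]

theorem transpose_mul_chord_mul (M : Matrix ι ι R) (a b : ι) :
    Mᵀ * chord a b * M = vecMulVec (M a) (M b) + vecMulVec (M b) (M a) := by
  simp only [chord, single_eq_single_vecMulVec_single, mul_add, add_mul, mul_vecMulVec,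
    vecMulVec_mul, mulVec_transpose, single_one_vecMul, row]

theorem transpose_mul_chord_mul_of_row_eq {M : Matrix ι ι R} {a b c : ι}
    (ha : M a = Pi.single a 1) (hb : M b = Pi.single b 1 + Pi.single c 1) :
    Mᵀ * chord a b * M = chord a c + chord a b := by
  rw [transpose_mul_chord_mul, ha, hb, vecMulVec_add, add_vecMulVec]
  simp only [chord, single_eq_single_vecMulVec_single]
  abel

end Matrix

open Matrix

/-- Band sum of component i over component j acting on a page representing a
chord between component i (strip p) and component j (strip n): the foot on j
doubles onto i and j. -/
theorem stmt_12 (q N : ℕ) (i j : Fin q) (hij : i ≠ j) (n p : Fin N) (hnp : n ≠ p)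
    (E M A : Matrix (Fin q × Fin N) (Fin q × Fin N) ℝ)
    (hE : ∀ (s t : Fin q) (u v : Fin N),
      E (s, u) (t, v) = if s = j ∧ t = i ∧ u = v then 1 else 0)
    (hM : M = 1 + E)
    (hA : ∀ x y, A x y =
      if (x = (i, p) ∧ y = (j, n)) ∨ (x = (j, n) ∧ y = (i, p)) then 1 else 0) :
    Mᵀ * A * M = Matrix.of (fun x y : Fin q × Fin N =>
      if (x = (i, p) ∧ y = (i, n)) ∨ (x = (i, p) ∧ y = (j, n)) ∨
         (y = (i, p) ∧ x = (i, n)) ∨ (y = (i, p) ∧ x = (j, n))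
      then (1 : ℝ) else 0) := by
  have hip_jn : ((i, p) : Fin q × Fin N) ≠ (j, n) := by simp [hij]
  have hip_in : ((i, p) : Fin q × Fin N) ≠ (i, n) := by simp [hnp.symm]
  have hjn_in : ((j, n) : Fin q × Fin N) ≠ (i, n) := by simp [hij.symm]
  have hM' : M = bandSum i j := by
    ext ⟨s, u⟩ ⟨t, v⟩
    rw [hM, bandSum, Matrix.add_apply, Matrix.add_apply, hE, of_apply]
  have hA' : A = chord (i, p) (j, n) := by
    ext x y
    rw [hA, chord_apply hip_jn]
  rw [hA', hM', transpose_mul_chord_mul_of_row_eq (bandSum_apply_left hij p)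
    (bandSum_apply_right i j n)]
  ext x y
  rw [chord_add_chord_apply hip_jn hip_in hjn_in, of_apply]
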